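/- The map Φ_{λ;m} from increasing gapless tableaux of two-row shape λ with max entry m to standard Young tableaux preserves descent sets: Des(T) = Des(Φ_{λ;m}(T)) for every T ∈ IGLT(λ)_m. -/

import Mathlib

/-- A two-row tableau, given by its two rows (lists of entries). -/
structure TwoRowT where
  r1 : List ℕ
  r2 : List ℕ
deriving DecidableEq

/-- A "hook-plus" tableau: two rows together with the part of the first
column lying below the second row. -/
structure HookT where
  r1 : List ℕ
  r2 : List ℕ
  col : List ℕ
deriving DecidableEq

/-- `T` is an increasing gapless tableau of shape `(l1,l2)` with maximum entry `m`. -/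
def IsIGLT (l1 l2 m : ℕ) (T : TwoRowT) : Prop :=
  T.r1.length = l1 ∧ T.r2.length = l2 ∧
  T.r1.Chain' (· < ·) ∧ T.r2.Chain' (· < ·) ∧
  (∀ j, j < l2 → T.r1.getD j 0 < T.r2.getD j 0) ∧
  (∀ x ∈ T.r1, 1 ≤ x ∧ x ≤ m) ∧ (∀ x ∈ T.r2, 1 ≤ x ∧ x ≤ m) ∧
  (∀ k, 1 ≤ k → k ≤ m → k ∈ T.r1 ∨ k ∈ T.r2) ∧
  (m ∈ T.r1 ∨ m ∈ T.r2)

/-- The set `A` of repeated entries of a two-row increasing tableau. -/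
def setA (T : TwoRowT) : List ℕ := T.r1.filter (fun x => x ∈ T.r2)

/-- The set `B`: entries of the second row immediately to the right of an element of `A`. -/
def setB (T : TwoRowT) : List ℕ :=
  (T.r2.zip T.r2.tail).filterMap (fun p => if p.1 ∈ setA T then some p.2 else none)

/-- Pechenik's map `Φ_{λ;m}`. -/
def Phi (T : TwoRowT) : HookT :=
  ⟨T.r1.filter (fun x => x ∉ setA T),
   T.r2.filter (fun x => x ∉ setB T),
   List.insertionSort (· ≤ ·) (setB T)⟩

/-- The shape of a hook-plus tableau, as a list. -/
def shapeOf (S : HookT) : List ℕ :=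
  S.r1.length :: S.r2.length :: List.replicate S.col.length 1

/-- `S` is a standard Young tableau with entries `1,...,m`. -/
def IsSYTHook (m : ℕ) (S : HookT) : Prop :=
  S.r1.Chain' (· < ·) ∧ S.r2.Chain' (· < ·) ∧
  ((S.r1.take 1) ++ (S.r2.take 1) ++ S.col).Chain' (· < ·) ∧
  (∀ j, j < S.r2.length → S.r1.getD j 0 < S.r2.getD j 0) ∧
  S.r2.length ≤ S.r1.length ∧
  (S.col ≠ [] → S.r2 ≠ []) ∧
  (S.r1 ++ S.r2 ++ S.col).Perm (List.range' 1 m)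

/-- The shape `λ_m^{(1)} = (λ₁-k, λ₂-k, 1^k)`. -/
def lamShape1 (l1 l2 k : ℕ) : List ℕ := [l1 - k, l2 - k] ++ List.replicate k 1

/-- The shape `λ_m^{(2)} = (λ₁-k, λ₂-k+1, 1^(k-1))`. -/
def lamShape2 (l1 l2 k : ℕ) : List ℕ := [l1 - k, l2 - k + 1] ++ List.replicate (k - 1) 1

/-- The set `Par(λ;m)` of shapes occurring in Pechenik's expansion. -/
def ParSet (l1 l2 n m : ℕ) : Set (List ℕ) :=
  {s | (n - m + 1 < l2 ∨ m = n) ∧ s = lamShape1 l1 l2 (n - m)} ∪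
  {s | l1 ≠ l2 ∧ m < n ∧ n - m < l2 ∧ s = lamShape2 l1 l2 (n - m)}

/-- Row index (1-based) of the entry `x` in a hook-plus tableau. -/
def rowIdx (S : HookT) (x : ℕ) : ℕ :=
  if x ∈ S.r1 then 1 else if x ∈ S.r2 then 2 else 3 + S.col.idxOf x

/-- Column index (0-based) of the entry `x` in a hook-plus tableau. -/
def colIdx (S : HookT) (x : ℕ) : ℕ :=
  if x ∈ S.r1 then S.r1.idxOf x else if x ∈ S.r2 then S.r2.idxOf x else 0

/-- Descent set of an increasing gapless two-row tableau with max entry `m`. -/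
def desT (m : ℕ) (T : TwoRowT) : Finset ℕ :=
  (Finset.Ioo 0 m).filter (fun i => i ∈ T.r1 ∧ i + 1 ∈ T.r2)

/-- Descent set of a standard Young tableau with entries `1,...,m`. -/
def desS (m : ℕ) (S : HookT) : Finset ℕ :=
  (Finset.Ioo 0 m).filter (fun i => rowIdx S i < rowIdx S (i + 1))

def swapVal (i j x : ℕ) : ℕ := if x = i then j else if x = j then i else x

/-- Swap the entries `i` and `j` in a two-row tableau. -/
def twoRowSwap (i j : ℕ) (T : TwoRowT) : TwoRowT :=
  ⟨T.r1.map (swapVal i j), T.r2.map (swapVal i j)⟩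

/-- Swap the entries `i` and `j` in a hook-plus tableau. -/
def hookSwap (i j : ℕ) (S : HookT) : HookT :=
  ⟨S.r1.map (swapVal i j), S.r2.map (swapVal i j), S.col.map (swapVal i j)⟩

/-- Searles' 0-Hecke operator `π_i` on a standard Young tableau:
`some S` means the result is `S`, `none` means the result is `0`. -/
def searlesStep (i : ℕ) (S : HookT) : Option HookT :=
  if colIdx S i < colIdx S (i + 1) then some S
  else if colIdx S i = colIdx S (i + 1) then none
  else some (hookSwap i (i + 1) S)

/-- Kim–Yoo's 0-Hecke operator `π_i` on an increasing gapless tableau. -/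
def kyStep (i : ℕ) (T : TwoRowT) : Option TwoRowT :=
  if i ∈ T.r1 ∧ i + 1 ∈ T.r2 then
    if i ∉ T.r2 ∧ i + 1 ∉ T.r1 ∧ T.r2.idxOf (i + 1) < T.r1.idxOf i then
      some (twoRowSwap i (i + 1) T)
    else none
  else some T

/-- Searles' operator, extended linearly. -/
noncomputable def piOp (i : ℕ) : (HookT →₀ ℂ) →ₗ[ℂ] (HookT →₀ ℂ) :=
  Finsupp.lsum ℂ fun S => (searlesStep i S).elim 0 fun S' => Finsupp.lsingle S'

/-- Kim–Yoo's operator, extended linearly. -/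
noncomputable def kyOp (i : ℕ) : (TwoRowT →₀ ℂ) →ₗ[ℂ] (TwoRowT →₀ ℂ) :=
  Finsupp.lsum ℂ fun T => (kyStep i T).elim 0 fun T' => Finsupp.lsingle T'

/-- The data of the boxes occupied by repeated entries: for each repeated entry `i`,
the pair of (0-based) columns of its occurrence in row 1 and in row 2.
For two-row shapes this datum determines the pair `(Γ_i(T), T⁻¹(i))`. -/
def repPairs (T : TwoRowT) : Set (ℕ × ℕ) :=
  {p | ∃ i, i ∈ T.r1 ∧ i ∈ T.r2 ∧ p = (T.r1.idxOf i, T.r2.idxOf i)}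

/-- The Kim–Yoo equivalence `∼_{λ;m}` on two-row increasing gapless tableaux. -/
def equivKY (T1 T2 : TwoRowT) : Prop := repPairs T1 = repPairs T2

/-- The equivalence class of `T` in `IGLT(λ)_m` under `∼_{λ;m}`. -/
def classOf (l1 l2 m : ℕ) (T : TwoRowT) : Set TwoRowT :=
  {T' | IsIGLT l1 l2 m T' ∧ equivKY T T'}

/-- The columns (0-based) of the bottommost boxes of the repeated entries,
listed in increasing order of the repeated entries. -/
def botCols (T : TwoRowT) : List ℕ :=
  (T.r1.filter (fun x => x ∈ T.r2)).map (fun i => T.r2.idxOf i)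

/-- The partial order `⪯` on equivalence classes. -/
def classLE (C1 C2 : Set TwoRowT) : Prop :=
  ∃ T1 ∈ C1, ∃ T2 ∈ C2, List.Forall₂ (· ≤ ·) (botCols T1) (botCols T2)

open Classical in
/-- The fundamental quasisymmetric function `F_{comp(D)}` of degree `m`,
as a formal power series in the variables `x_0, x_1, x_2, ...`. -/
noncomputable def Fqs (m : ℕ) (D : Finset ℕ) : MvPowerSeries ℕ ℚ :=
  fun e =>
    if ∃ f : Fin m → ℕ, Monotone f ∧
        (∀ j : ℕ, ∀ hj : j < m, 0 < j → j ∈ D → f ⟨j - 1, by omega⟩ < f ⟨j, hj⟩) ∧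
        (∀ i : ℕ, e i = Nat.card {j : Fin m // f j = i})
    then 1 else 0

/-- The Schur function `s_μ = Σ_{S ∈ SYT(μ)} F_{comp(Des(S))}` (for shapes
representable as hook-plus tableaux). -/
noncomputable def schurF (m : ℕ) (μ : List ℕ) : MvPowerSeries ℕ ℚ :=
  ∑ᶠ S ∈ {S : HookT | IsSYTHook m S ∧ shapeOf S = μ}, Fqs m (desS m S)


section Aux

lemma mem_setA {T : TwoRowT} {x : ℕ} : x ∈ setA T ↔ x ∈ T.r1 ∧ x ∈ T.r2 := by
  simp [setA]

lemma mem_setB {T : TwoRowT} {x : ℕ} :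
    x ∈ setB T ↔ ∃ a, (a, x) ∈ T.r2.zip T.r2.tail ∧ a ∈ setA T := by
  simp only [setB, List.mem_filterMap]
  constructor
  · rintro ⟨⟨a, b⟩, hmem, hab⟩
    by_cases h : a ∈ setA T
    · simp [h] at hab; exact ⟨a, by simpa [hab] using hmem, h⟩
    · simp [h] at hab
  · rintro ⟨a, hmem, ha⟩
    exact ⟨(a, x), hmem, by simp [ha]⟩

lemma snd_mem_of_zip {l : List ℕ} {a b : ℕ} (h : (a, b) ∈ l.zip l.tail) : b ∈ l :=
  List.mem_of_mem_tail (List.of_mem_zip h).2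

lemma fst_lt_snd_of_zip {l : List ℕ} (hl : l.Chain' (· < ·)) {a b : ℕ}
    (h : (a, b) ∈ l.zip l.tail) : a < b := by
  induction l with
  | nil => simp at h
  | cons x t ih =>
    cases t with
    | nil => simp at h
    | cons y t' =>
      rw [List.Chain', List.isChain_cons_cons] at hl
      simp only [List.tail_cons, List.zip_cons_cons, List.mem_cons] at h
      rcases h with h | h
      · cases h; exact hl.1
      · exact ih hl.2 h

lemma le_fst_of_zip {l : List ℕ} (hl : l.Pairwise (· < ·)) {a b c : ℕ}
    (h : (a, b) ∈ l.zip l.tail) (hc : c ∈ l) (hcb : c < b) : c ≤ a := by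
  induction l with
  | nil => simp at h
  | cons x t ih =>
    cases t with
    | nil => simp at h
    | cons y t' =>
      rw [List.pairwise_cons] at hl
      simp only [List.tail_cons, List.zip_cons_cons, List.mem_cons] at h
      rcases h with h | h
      · obtain ⟨rfl, rfl⟩ := Prod.mk.injEq .. ▸ h
        rcases List.mem_cons.mp hc with rfl | hc
        · exact le_rfl
        · rcases List.mem_cons.mp hc with rfl | hc
          · omega
          · have := (List.pairwise_cons.mp hl.2).1 c hc
            omega
      · have haty : a ∈ y :: t' := (List.of_mem_zip h).1
        rcases List.mem_cons.mp hc with rfl | hc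
        · exact le_of_lt (hl.1 a haty)
        · exact ih hl.2 h hc

lemma succ_pair_mem_zip {l : List ℕ} (hl : l.Pairwise (· < ·)) {i : ℕ}
    (hi : i ∈ l) (hi1 : i + 1 ∈ l) : (i, i + 1) ∈ l.zip l.tail := by
  induction l with
  | nil => simp at hi
  | cons x t ih =>
    rw [List.pairwise_cons] at hl
    cases t with
    | nil =>
      simp only [List.mem_singleton] at hi hi1
      omega
    | cons y t' =>
      simp only [List.tail_cons, List.zip_cons_cons, List.mem_cons]
      rcases List.mem_cons.mp hi with rfl | hi
      · have hy : i < y := hl.1 y (by simp)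
        have hi1' : i + 1 ∈ y :: t' := by
          rcases List.mem_cons.mp hi1 with h | h
          · omega
          · exact h
        have : y = i + 1 := by
          rcases List.mem_cons.mp hi1' with h | h
          · omega
          · have := List.pairwise_cons.mp hl.2
            have := this.1 _ h
            omega
        left; rw [this]
      · have hx : x < i := hl.1 i hi
        have hi1' : i + 1 ∈ y :: t' := by
          rcases List.mem_cons.mp hi1 with h | h
          · omega
          · exact h
        right; exact ih hl.2 hi hi1'

lemma filterMap_sublist_map_snd (p : ℕ → Bool) :
    ∀ (l : List (ℕ × ℕ)),
      List.Sublist (l.filterMap (fun q => if p q.1 then some q.2 else none)) (l.map Prod.snd) := by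
  intro l
  induction l with
  | nil => simp
  | cons q t ih =>
    by_cases h : p q.1
    · simpa [List.filterMap_cons, h] using ih.cons₂ q.2
    · simpa [List.filterMap_cons, h] using ih.cons q.2

lemma setB_pairwise {T : TwoRowT} (h : T.r2.Chain' (· < ·)) :
    (setB T).Pairwise (· < ·) := by
  have hsub : List.Sublist (setB T) T.r2.tail := by
    have h2 := filterMap_sublist_map_snd (fun a => decide (a ∈ setA T)) (T.r2.zip T.r2.tail)
    rw [List.map_snd_zip (by cases T.r2 <;> simp)] at h2
    simpa [setB] using h2
  have htail : T.r2.tail.Pairwise (· < ·) :=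
    (List.isChain_iff_pairwise.mp h).sublist (List.tail_sublist _)
  exact htail.sublist hsub

lemma indexOf_lt_indexOf {l : List ℕ} (h : l.Pairwise (· < ·)) {a b : ℕ}
    (ha : a ∈ l) (hb : b ∈ l) (hab : a < b) : List.idxOf a l < List.idxOf b l := by
  induction l with
  | nil => simp at ha
  | cons x t ih =>
    rw [List.pairwise_cons] at h
    by_cases hax : a = x
    · subst hax
      have hbx : b ≠ a := by omega
      rw [List.idxOf_cons_self, List.idxOf_cons_ne _ (by simpa using (Ne.symm hbx))]
      omega
    · have ha' : a ∈ t := by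
        rcases List.mem_cons.mp ha with h' | h'
        · exact absurd h' hax
        · exact h'
      have hxa : x < a := h.1 a ha'
      have hbx : b ≠ x := by omega
      have hb' : b ∈ t := by
        rcases List.mem_cons.mp hb with h' | h'
        · exact absurd h' hbx
        · exact h'
      rw [List.idxOf_cons_ne _ (by simpa using (Ne.symm hax)),
          List.idxOf_cons_ne _ (by simpa using (Ne.symm hbx))]
      exact Nat.succ_lt_succ (ih h.2 ha' hb')

lemma col_eq_setB {T : TwoRowT} (h : T.r2.Chain' (· < ·)) : (Phi T).col = setB T := by
  have : (setB T).Pairwise (· ≤ ·) :=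
    List.Pairwise.imp (fun h => le_of_lt h) (setB_pairwise h)
  exact this.insertionSort_eq

lemma mem_phi_r1 {T : TwoRowT} {x : ℕ} : x ∈ (Phi T).r1 ↔ x ∈ T.r1 ∧ x ∉ T.r2 := by
  simp [Phi, mem_setA]
  tauto

lemma mem_phi_r2 {T : TwoRowT} {x : ℕ} : x ∈ (Phi T).r2 ↔ x ∈ T.r2 ∧ x ∉ setB T := by
  simp [Phi]

lemma one_le_rowIdx (S : HookT) (x : ℕ) : 1 ≤ rowIdx S x := by
  unfold rowIdx
  split
  · exact le_rfl
  · split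
    · omega
    · omega

end Aux

/-- `Φ_{λ;m}` preserves descent sets: `Des(T) = Des(Φ_{λ;m}(T))` for every
`T ∈ IGLT(λ)_m` with `λ` a two-row shape. -/
theorem stmt_6 (l1 l2 n m : ℕ) (h2 : 1 ≤ l2) (h12 : l2 ≤ l1) (hn : n = l1 + l2)
    (T : TwoRowT) (hT : IsIGLT l1 l2 m T) :
    desT m T = desS m (Phi T) := by
  obtain ⟨-, -, hc1, hc2, -, -, -, hgap, -⟩ := hT
  have hp2 : T.r2.Pairwise (· < ·) := List.isChain_iff_pairwise.mp hc2
  have hcol : (Phi T).col = setB T := col_eq_setB hc2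
  have hcolpw : (Phi T).col.Pairwise (· < ·) := by rw [hcol]; exact setB_pairwise hc2
  ext i
  simp only [desT, desS, Finset.mem_filter, Finset.mem_Ioo]
  constructor
  · rintro ⟨⟨h0, hm⟩, hir1, hi1r2⟩
    refine ⟨⟨h0, hm⟩, ?_⟩
    by_cases hir2 : i ∈ T.r2
    · have hiA : i ∈ setA T := mem_setA.mpr ⟨hir1, hir2⟩
      have hzip : (i, i + 1) ∈ T.r2.zip T.r2.tail := succ_pair_mem_zip hp2 hir2 hi1r2
      have hi1B : i + 1 ∈ setB T := mem_setB.mpr ⟨i, hzip, hiA⟩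
      have hn1 : i + 1 ∉ (Phi T).r1 := fun h => (mem_phi_r1.mp h).2 hi1r2
      have hn2 : i + 1 ∉ (Phi T).r2 := fun h => (mem_phi_r2.mp h).2 hi1B
      have hri1 : rowIdx (Phi T) (i + 1) = 3 + List.idxOf (i + 1) (Phi T).col := by
        rw [rowIdx, if_neg hn1, if_neg hn2]
      have hinotr1 : i ∉ (Phi T).r1 := fun h => (mem_phi_r1.mp h).2 hir2
      by_cases hiB : i ∈ setB T
      · have hinotr2 : i ∉ (Phi T).r2 := fun h => (mem_phi_r2.mp h).2 hiB
        rw [rowIdx, if_neg hinotr1, if_neg hinotr2, hri1]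
        have hidx : List.idxOf i (Phi T).col < List.idxOf (i + 1) (Phi T).col := by
          apply indexOf_lt_indexOf hcolpw _ _ (by omega)
          · rw [hcol]; exact hiB
          · rw [hcol]; exact hi1B
        omega
      · have hmem : i ∈ (Phi T).r2 := mem_phi_r2.mpr ⟨hir2, hiB⟩
        rw [rowIdx, if_neg hinotr1, if_pos hmem, hri1]; omega
    · have hmem : i ∈ (Phi T).r1 := mem_phi_r1.mpr ⟨hir1, hir2⟩
      have hn1 : i + 1 ∉ (Phi T).r1 := fun h => (mem_phi_r1.mp h).2 hi1r2
      rw [rowIdx, if_pos hmem, rowIdx, if_neg hn1]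
      split <;> omega
  · rintro ⟨⟨h0, hm⟩, hlt⟩
    refine ⟨⟨h0, hm⟩, ?_⟩
    by_contra hcon
    have hge : rowIdx (Phi T) (i + 1) ≤ rowIdx (Phi T) i := by
      by_cases hi1r2 : i + 1 ∈ T.r2
      · have hir1 : i ∉ T.r1 := fun h => hcon ⟨h, hi1r2⟩
        have hir2 : i ∈ T.r2 := by
          rcases hgap i (by omega) (by omega) with h | h
          · exact absurd h hir1
          · exact h
        have hi1B : i + 1 ∉ setB T := by
          intro hB
          obtain ⟨a, hzip, haA⟩ := mem_setB.mp hB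
          have h1 : a < i + 1 := fst_lt_snd_of_zip hc2 hzip
          have h2 : i ≤ a := le_fst_of_zip hp2 hzip hir2 (by omega)
          have : a = i := by omega
          subst this
          exact hir1 (mem_setA.mp haA).1
        have hn1 : i + 1 ∉ (Phi T).r1 := fun h => (mem_phi_r1.mp h).2 hi1r2
        have hmem : i + 1 ∈ (Phi T).r2 := mem_phi_r2.mpr ⟨hi1r2, hi1B⟩
        have hri1 : rowIdx (Phi T) (i + 1) = 2 := by
          rw [rowIdx, if_neg hn1, if_pos hmem]
        have hinotr1 : i ∉ (Phi T).r1 := fun h => hir1 (mem_phi_r1.mp h).1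
        rw [hri1, rowIdx, if_neg hinotr1]
        split <;> omega
      · have hi1r1 : i + 1 ∈ T.r1 := by
          rcases hgap (i + 1) (by omega) (by omega) with h | h
          · exact h
          · exact absurd h hi1r2
        have hmem : i + 1 ∈ (Phi T).r1 := mem_phi_r1.mpr ⟨hi1r1, hi1r2⟩
        rw [rowIdx, if_pos hmem]
        exact one_le_rowIdx _ _
    omega
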